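/- arXiv:0908.1691 — 5 statements merged into one kernel-verified Lean document; each statement's English description precedes it below -/
import Mathlib

section
/- Let m ≥ 1, let Ω ⊆ ℝ^{m+1} be open, and let u, v : ℝ^{m+1} → ℝ be twice continuously differentiable on Ω and harmonic on Ω. Writing points of ℝ^{m+1} as (x,y) with x ∈ ℝ^m and y ∈ ℝ, and writing ∇ₓ for the gradient in the x-variables and divₓ for the divergence in the x-variables, one has on Ω: divₓ((∂_y u) ∇ₓ v + (∂_y v) ∇ₓ u) + ∂_y((∂_y u)(∂_y v) − ∇ₓ u · ∇ₓ v) = 0. -/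
/-!
Since `pdx` and `pdy` are line derivatives along coordinate vectors, the identity is an instance of
one for line derivatives along arbitrary vectors `e i` and `n`. Expanding by the product rule, the
terms `∂ₙ∂ᵢu ∂ᵢv + ∂ᵢu ∂ₙ∂ᵢv` produced by the divergence part cancel, by symmetry of second
derivatives, against those produced by `∂ₙ(∑ ∂ᵢu ∂ᵢv)`; what remains is `∂ₙu Δv + ∂ₙv Δu`,
which vanishes for harmonic `u`, `v`.
-/

/-- Partial derivative in the `i`-th horizontal coordinate of a function on `ℝ^m × ℝ`. -/
noncomputable def pdx (m : ℕ) (i : Fin m) (f : (Fin m → ℝ) × ℝ → ℝ)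
    (p : (Fin m → ℝ) × ℝ) : ℝ :=
  deriv (fun s => f (Function.update p.1 i s, p.2)) (p.1 i)

/-- Partial derivative in the vertical coordinate of a function on `ℝ^m × ℝ`. -/
noncomputable def pdy (m : ℕ) (f : (Fin m → ℝ) × ℝ → ℝ) (p : (Fin m → ℝ) × ℝ) : ℝ :=
  deriv (fun s => f (p.1, s)) p.2

section LineDeriv

variable {E : Type*} [NormedAddCommGroup E] [NormedSpace ℝ E] {f u v : E → ℝ} {p : E}

theorem hasFDerivAt_lineDeriv (hf : ContDiffAt ℝ 2 f p) (w : E) :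
    HasFDerivAt (fun q => lineDeriv ℝ f q w)
      ((ContinuousLinearMap.apply ℝ ℝ w).comp (fderiv ℝ (fderiv ℝ f) p)) p := by
  have hfderiv : HasFDerivAt (fderiv ℝ f) (fderiv ℝ (fderiv ℝ f) p) p :=
    ((hf.fderiv_right (m := 1) (by norm_num)).differentiableAt (by norm_num)).hasFDerivAt
  refine ((ContinuousLinearMap.apply ℝ ℝ w).hasFDerivAt.comp p hfderiv).congr_of_eventuallyEq ?_
  filter_upwards [hf.eventually (by simp)] with q hq
  exact (hq.differentiableAt (by norm_num)).lineDeriv_eq_fderiv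

theorem lineDeriv_lineDeriv (hf : ContDiffAt ℝ 2 f p) (v w : E) :
    lineDeriv ℝ (fun q => lineDeriv ℝ f q v) p w = fderiv ℝ (fderiv ℝ f) p w v :=
  ((hasFDerivAt_lineDeriv hf v).hasLineDerivAt w).lineDeriv

theorem divergence_identity_of_contDiffAt {ι : Type*} [Fintype ι]
    (hu : ContDiffAt ℝ 2 u p) (hv : ContDiffAt ℝ 2 v p) (e : ι → E) (n : E) :
    (∑ i, lineDeriv ℝ (fun q => lineDeriv ℝ u q n * lineDeriv ℝ v q (e i) +
        lineDeriv ℝ v q n * lineDeriv ℝ u q (e i)) p (e i)) +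
      lineDeriv ℝ (fun q => lineDeriv ℝ u q n * lineDeriv ℝ v q n -
        ∑ i, lineDeriv ℝ u q (e i) * lineDeriv ℝ v q (e i)) p n =
    lineDeriv ℝ u p n * ((∑ i, lineDeriv ℝ (fun q => lineDeriv ℝ v q (e i)) p (e i)) +
        lineDeriv ℝ (fun q => lineDeriv ℝ v q n) p n) +
      lineDeriv ℝ v p n * ((∑ i, lineDeriv ℝ (fun q => lineDeriv ℝ u q (e i)) p (e i)) +
        lineDeriv ℝ (fun q => lineDeriv ℝ u q n) p n) := by
  have hsymm_u := hu.isSymmSndFDerivAt (by simp [minSmoothness_of_isRCLikeNormedField])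
  have hsymm_v := hv.isSymmSndFDerivAt (by simp [minSmoothness_of_isRCLikeNormedField])
  have hderiv_uv (a b : E) := (hasFDerivAt_lineDeriv hu a).fun_mul (hasFDerivAt_lineDeriv hv b)
  have hderiv_vu (a b : E) := (hasFDerivAt_lineDeriv hv a).fun_mul (hasFDerivAt_lineDeriv hu b)
  rw [(((hderiv_uv n n).fun_sub (HasFDerivAt.fun_sum fun i _ => hderiv_uv (e i) (e i))
      ).hasLineDerivAt n).lineDeriv,
    Finset.sum_congr rfl fun i _ =>
      (((hderiv_uv n (e i)).fun_add (hderiv_vu n (e i))).hasLineDerivAt (e i)).lineDeriv]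
  simp only [lineDeriv_lineDeriv hu, lineDeriv_lineDeriv hv, add_apply, sub_apply, smul_apply,
    FunLike.coe_sum, Finset.sum_apply, ContinuousLinearMap.comp_apply,
    ContinuousLinearMap.apply_apply, smul_eq_mul, hsymm_u n, hsymm_v n, mul_add, Finset.mul_sum,
    Finset.sum_add_distrib]
  ring

end LineDeriv

theorem pdx_eq_lineDeriv (m : ℕ) (i : Fin m) (f : (Fin m → ℝ) × ℝ → ℝ) :
    pdx m i f = fun p => lineDeriv ℝ f p (Pi.single i 1, 0) := by
  ext p
  have hline (s : ℝ) : ((Function.update p.1 i s, p.2) : (Fin m → ℝ) × ℝ) =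
      p + (s - p.1 i) • ((Pi.single i 1, 0) : (Fin m → ℝ) × ℝ) := by
    ext j
    · rcases eq_or_ne j i with rfl | hj <;> simp [*]
    · simp
  simp only [pdx, lineDeriv, hline]
  exact (deriv_comp_sub_const (fun t => f (p + t • ((Pi.single i 1, 0) : (Fin m → ℝ) × ℝ)))
    _ _).trans (by rw [sub_self])

theorem pdy_eq_lineDeriv (m : ℕ) (f : (Fin m → ℝ) × ℝ → ℝ) :
    pdy m f = fun p => lineDeriv ℝ f p (0, 1) := by
  ext p
  have hline (s : ℝ) :
      ((p.1, s) : (Fin m → ℝ) × ℝ) = p + (s - p.2) • ((0, 1) : (Fin m → ℝ) × ℝ) := by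
    ext <;> simp
  simp only [pdy, lineDeriv, hline]
  exact (deriv_comp_sub_const (fun t => f (p + t • (0, 1))) _ _).trans (by rw [sub_self])

theorem statement1_general (m : ℕ) (Ω : Set ((Fin m → ℝ) × ℝ)) (hΩ : IsOpen Ω)
    (u v : (Fin m → ℝ) × ℝ → ℝ)
    (hu : ContDiffOn ℝ 2 u Ω) (hv : ContDiffOn ℝ 2 v Ω)
    (hharmu : ∀ p ∈ Ω, (∑ i, pdx m i (pdx m i u) p) + pdy m (pdy m u) p = 0)
    (hharmv : ∀ p ∈ Ω, (∑ i, pdx m i (pdx m i v) p) + pdy m (pdy m v) p = 0) :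
    ∀ p ∈ Ω,
      (∑ i, pdx m i (fun q => pdy m u q * pdx m i v q + pdy m v q * pdx m i u q) p) +
        pdy m (fun q => pdy m u q * pdy m v q - ∑ i, pdx m i u q * pdx m i v q) p = 0 := by
  intro p hp
  simp only [pdx_eq_lineDeriv, pdy_eq_lineDeriv] at hharmu hharmv ⊢
  rw [divergence_identity_of_contDiffAt (hu.contDiffAt (hΩ.mem_nhds hp))
      (hv.contDiffAt (hΩ.mem_nhds hp)), hharmu p hp, hharmv p hp, mul_zero, mul_zero, add_zero]

/-- higher-dimensional divergence identity for harmonic functions: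
`divₓ((∂_y u) ∇ₓ v + (∂_y v) ∇ₓ u) + ∂_y((∂_y u)(∂_y v) − ∇ₓ u · ∇ₓ v) = 0` on `Ω`. -/
theorem statement1 (m : ℕ) (hm : 1 ≤ m) (Ω : Set ((Fin m → ℝ) × ℝ)) (hΩ : IsOpen Ω)
    (u v : (Fin m → ℝ) × ℝ → ℝ)
    (hu : ContDiffOn ℝ 2 u Ω) (hv : ContDiffOn ℝ 2 v Ω)
    (hharmu : ∀ p ∈ Ω, (∑ i, pdx m i (pdx m i u) p) + pdy m (pdy m u) p = 0)
    (hharmv : ∀ p ∈ Ω, (∑ i, pdx m i (pdx m i v) p) + pdy m (pdy m v) p = 0) :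
    ∀ p ∈ Ω,
      (∑ i, pdx m i (fun q => pdy m u q * pdx m i v q + pdy m v q * pdx m i u q) p) +
        pdy m (fun q => pdy m u q * pdy m v q - ∑ i, pdx m i u q * pdx m i v q) p = 0 :=
  statement1_general m Ω hΩ u v hu hv hharmu hharmv
end

section
/- For every real k ≠ 0, the matrix A(k) is positive definite; consequently det A(k) > 0 and A(k) is invertible. -/
/-- hyperbolic cotangent, `coth x = cosh x / sinh x` (for `x ≠ 0`). -/
noncomputable def coth (x : ℝ) : ℝ := Real.cosh x / Real.sinh x

/-- hyperbolic cosecant, `csch x = 1 / sinh x` (for `x ≠ 0`). -/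
noncomputable def csch (x : ℝ) : ℝ := 1 / Real.sinh x

/-- The symmetric tridiagonal matrix `A(k)` of the linearised fluid-loaded plate problem.
Rows/columns are indexed by `i : Fin n`, corresponding to the 1-based index `i+1`; the plate
separations are `Δh 0, …, Δh n`.  The 1-based entries are
`A(k)_{ii} = (k + coth(kΔh_{i−1}) + coth(kΔhᵢ))/k` and
`A(k)_{i,i+1} = A(k)_{i+1,i} = −csch(kΔhᵢ)/k`. -/
noncomputable def Amat (n : ℕ) (Δh : ℕ → ℝ) (k : ℝ) : Matrix (Fin n) (Fin n) ℝ :=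
  fun i j =>
    if (i : ℕ) = (j : ℕ) then (k + coth (k * Δh (i : ℕ)) + coth (k * Δh ((i : ℕ) + 1))) / k
    else if (i : ℕ) + 1 = (j : ℕ) then -(csch (k * Δh ((i : ℕ) + 1)) / k)
    else if (j : ℕ) + 1 = (i : ℕ) then -(csch (k * Δh ((j : ℕ) + 1)) / k)
    else 0

/-- The symmetric tridiagonal matrix `B(k)`, with 1-based entries
`B(k)_{ii} = U_{i−1}² coth(kΔh_{i−1}) + Uᵢ² coth(kΔhᵢ)` and
`B(k)_{i,i+1} = B(k)_{i+1,i} = −Uᵢ² csch(kΔhᵢ)`. -/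
noncomputable def Bmat (n : ℕ) (Δh U : ℕ → ℝ) (k : ℝ) : Matrix (Fin n) (Fin n) ℝ :=
  fun i j =>
    if (i : ℕ) = (j : ℕ) then
      U (i : ℕ) ^ 2 * coth (k * Δh (i : ℕ)) + U ((i : ℕ) + 1) ^ 2 * coth (k * Δh ((i : ℕ) + 1))
    else if (i : ℕ) + 1 = (j : ℕ) then -(U ((i : ℕ) + 1) ^ 2 * csch (k * Δh ((i : ℕ) + 1)))
    else if (j : ℕ) + 1 = (i : ℕ) then -(U ((j : ℕ) + 1) ^ 2 * csch (k * Δh ((j : ℕ) + 1)))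
    else 0

/-- The symmetric tridiagonal matrix `C(k)`, with 1-based entries
`C(k)_{ii} = U_{i−1} coth(kΔh_{i−1}) + Uᵢ coth(kΔhᵢ)` and
`C(k)_{i,i+1} = C(k)_{i+1,i} = −Uᵢ csch(kΔhᵢ)`. -/
noncomputable def Cmat (n : ℕ) (Δh U : ℕ → ℝ) (k : ℝ) : Matrix (Fin n) (Fin n) ℝ :=
  fun i j =>
    if (i : ℕ) = (j : ℕ) then
      U (i : ℕ) * coth (k * Δh (i : ℕ)) + U ((i : ℕ) + 1) * coth (k * Δh ((i : ℕ) + 1))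
    else if (i : ℕ) + 1 = (j : ℕ) then -(U ((i : ℕ) + 1) * csch (k * Δh ((i : ℕ) + 1)))
    else if (j : ℕ) + 1 = (i : ℕ) then -(U ((j : ℕ) + 1) * csch (k * Δh ((j : ℕ) + 1)))
    else 0

/-- The complex `2n × 2n` block matrix
`M(k) = [[0, Iₙ], [A(k)⁻¹(k B(k) − k⁴ Iₙ), −2i A(k)⁻¹ C(k)]]`,
real matrices being regarded as complex. -/
noncomputable def Mmat (n : ℕ) (Δh U : ℕ → ℝ) (k : ℝ) :
    Matrix (Fin n ⊕ Fin n) (Fin n ⊕ Fin n) ℂ :=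
  Matrix.fromBlocks 0 1
    (((Amat n Δh k)⁻¹ *
        (k • Bmat n Δh U k - k ^ 4 • (1 : Matrix (Fin n) (Fin n) ℝ))).map
      (fun x : ℝ => (x : ℂ)))
    ((-2 * Complex.I) • ((Amat n Δh k)⁻¹ * Cmat n Δh U k).map (fun x : ℝ => (x : ℂ)))

/-!
Strict diagonal dominance: `k · A(k)` has diagonal `k + coth(kΔh_{i-1}) + coth(kΔhᵢ)` and
off-diagonal entries `-csch(kΔhᵢ)`; after dividing by `k` both `coth(kΔh)/k` and `csch(kΔh)/k`
are positive (as `k sinh(kΔh) > 0`) and `csch ≤ coth` since `cosh ≥ 1`, so each diagonal entry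
exceeds its off-diagonal row sum by at least `1`. A symmetric real matrix with positive dominant
diagonal is positive definite by Gershgorin's circle theorem.
-/

open Finset

theorem Matrix.IsHermitian.posDef_of_sum_abs_lt_diag {ι : Type*} [Fintype ι] [DecidableEq ι]
    {A : Matrix ι ι ℝ} (hA : A.IsHermitian)
    (hdom : ∀ i, ∑ j ∈ univ.erase i, |A i j| < A i i) : A.PosDef := by
  refine hA.posDef_iff_eigenvalues_pos.mpr fun i => ?_
  have hv : hA.eigenvectorBasis i ≠ 0 := (hA.eigenvectorBasis.orthonormal.ne_zero i)
  have hμ : Module.End.HasEigenvalue (Matrix.toLin' A) (hA.eigenvalues i) :=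
    Module.End.hasEigenvalue_of_hasEigenvector
      ⟨Module.End.mem_eigenspace_iff.mpr (by simpa using hA.mulVec_eigenvectorBasis i),
        fun h => hv (by ext j; simpa using congrFun h j)⟩
  obtain ⟨r, hr⟩ := eigenvalue_mem_ball hμ
  simp only [Metric.mem_closedBall, Real.dist_eq, Real.norm_eq_abs] at hr
  linarith [neg_abs_le (hA.eigenvalues i - A r r), hdom r]

theorem Finset.sum_ite_const_le_of_subsingleton {α M : Type*} [Fintype α] [AddCommMonoid M]
    [PartialOrder M] [IsOrderedAddMonoid M] (P : α → Prop) [DecidablePred P]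
    (hP : ∀ a b, P a → P b → a = b) {c : M} (hc : 0 ≤ c) :
    ∑ j, (if P j then c else 0) ≤ c := by
  rw [sum_ite, sum_const_zero, add_zero, sum_const]
  have hcard : #(univ.filter P) ≤ 1 :=
    card_le_one.mpr fun a ha b hb => hP a b (mem_filter.mp ha).2 (mem_filter.mp hb).2
  simpa using nsmul_le_nsmul_left hc hcard

section Hyperbolic

variable {k t : ℝ}

theorem sinh_mul_mul_pos (hk : k ≠ 0) (ht : 0 < t) : 0 < Real.sinh (k * t) * k := by
  rcases hk.lt_or_gt with h | h
  · exact mul_pos_of_neg_of_neg (Real.sinh_neg_iff.mpr (mul_neg_of_neg_of_pos h ht)) h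
  · exact mul_pos (Real.sinh_pos_iff.mpr (mul_pos h ht)) h

theorem csch_mul_div_pos (hk : k ≠ 0) (ht : 0 < t) : 0 < csch (k * t) / k := by
  rw [csch, div_div]
  exact div_pos one_pos (sinh_mul_mul_pos hk ht)

theorem csch_mul_div_le_coth_mul_div (hk : k ≠ 0) (ht : 0 < t) :
    csch (k * t) / k ≤ coth (k * t) / k := by
  rw [csch, coth, div_div, div_div]
  have := sinh_mul_mul_pos hk ht
  gcongr
  exact Real.one_le_cosh _

end Hyperbolic

section Amat

variable {n : ℕ} {Δh : ℕ → ℝ} {k : ℝ}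

theorem Amat_isHermitian : (Amat n Δh k).IsHermitian := by
  ext i j
  simp only [Matrix.conjTranspose_apply, star_trivial, Amat]
  rcases Nat.lt_trichotomy i j with h | h | h
  · simp [h.ne, h.ne', show ¬((j : ℕ) + 1 = i) by omega]
  · simp [Fin.ext h]
  · simp [h.ne, h.ne', show ¬((i : ℕ) + 1 = j) by omega]

theorem Amat_apply_self (hk : k ≠ 0) (i : Fin n) :
    Amat n Δh k i i = 1 + coth (k * Δh i) / k + coth (k * Δh (i + 1)) / k := by
  simp only [Amat, if_true, add_div, div_self hk]

theorem abs_Amat_apply_le (hk : k ≠ 0) (hΔh : ∀ i ≤ n, 0 < Δh i) {i j : Fin n} (hij : j ≠ i) :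
    |Amat n Δh k i j| ≤ (if (j : ℕ) + 1 = i then csch (k * Δh i) / k else 0)
      + (if (i : ℕ) + 1 = j then csch (k * Δh (i + 1)) / k else 0) := by
  have hs₀ := csch_mul_div_pos hk (hΔh i i.is_lt.le)
  have hs₁ := csch_mul_div_pos hk (hΔh (i + 1) i.is_lt)
  have hne : (i : ℕ) ≠ j := fun h => hij (Fin.ext h).symm
  simp only [Amat, if_neg hne]
  by_cases hup : (i : ℕ) + 1 = j
  · rw [if_pos hup, if_pos hup, if_neg (show ¬((j : ℕ) + 1 = i) by omega), abs_neg,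
      abs_of_pos hs₁, zero_add]
  rw [if_neg hup, if_neg hup, add_zero]
  by_cases hdown : (j : ℕ) + 1 = i
  · rw [if_pos hdown, if_pos hdown, hdown, abs_neg, abs_of_pos hs₀]
  · rw [if_neg hdown, if_neg hdown, abs_zero]

theorem sum_abs_Amat_apply_le (hk : k ≠ 0) (hΔh : ∀ i ≤ n, 0 < Δh i) (i : Fin n) :
    ∑ j ∈ univ.erase i, |Amat n Δh k i j|
      ≤ csch (k * Δh i) / k + csch (k * Δh (i + 1)) / k := by
  have hs₀ := csch_mul_div_pos hk (hΔh i i.is_lt.le)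
  have hs₁ := csch_mul_div_pos hk (hΔh (i + 1) i.is_lt)
  calc ∑ j ∈ univ.erase i, |Amat n Δh k i j|
      ≤ ∑ j ∈ univ.erase i, ((if (j : ℕ) + 1 = i then csch (k * Δh i) / k else 0)
          + (if (i : ℕ) + 1 = j then csch (k * Δh (i + 1)) / k else 0)) :=
        sum_le_sum fun j hj => abs_Amat_apply_le hk hΔh (ne_of_mem_erase hj)
    _ ≤ ∑ j : Fin n, ((if (j : ℕ) + 1 = i then csch (k * Δh i) / k else 0)
          + (if (i : ℕ) + 1 = j then csch (k * Δh (i + 1)) / k else 0)) :=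
        sum_le_sum_of_subset_of_nonneg (subset_univ _) fun j _ _ => by positivity
    _ ≤ csch (k * Δh i) / k + csch (k * Δh (i + 1)) / k := by
        rw [sum_add_distrib]
        gcongr
        · exact sum_ite_const_le_of_subsingleton _ (fun a b ha hb => Fin.ext (by omega)) hs₀.le
        · exact sum_ite_const_le_of_subsingleton _ (fun a b ha hb => Fin.ext (by omega)) hs₁.le

theorem Amat_posDef (hk : k ≠ 0) (hΔh : ∀ i ≤ n, 0 < Δh i) : (Amat n Δh k).PosDef := by
  refine Amat_isHermitian.posDef_of_sum_abs_lt_diag fun i => ?_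
  have hc₀ := csch_mul_div_le_coth_mul_div hk (hΔh i i.is_lt.le)
  have hc₁ := csch_mul_div_le_coth_mul_div hk (hΔh (i + 1) i.is_lt)
  rw [Amat_apply_self hk]
  linarith [sum_abs_Amat_apply_le hk hΔh i]

end Amat

theorem statement5_general (n : ℕ) (Δh : ℕ → ℝ) (hΔh : ∀ i ≤ n, 0 < Δh i)
    (k : ℝ) (hk : k ≠ 0) :
    (Amat n Δh k).PosDef ∧ 0 < (Amat n Δh k).det ∧ IsUnit (Amat n Δh k) := by
  have hA := Amat_posDef hk hΔh
  exact ⟨hA, hA.det_pos, hA.isUnit⟩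

/-- for every real `k ≠ 0` the matrix `A(k)` is positive definite; consequently
`det A(k) > 0` and `A(k)` is invertible. -/
theorem statement5 (n : ℕ) (hn : 1 ≤ n) (Δh : ℕ → ℝ) (hΔh : ∀ i ≤ n, 0 < Δh i)
    (k : ℝ) (hk : k ≠ 0) :
    (Amat n Δh k).PosDef ∧ 0 < (Amat n Δh k).det ∧ IsUnit (Amat n Δh k) :=
  statement5_general n Δh hΔh k hk
end

section
/- Let n ≥ 1, let A, C, D be real symmetric n×n matrices with A positive definite, and suppose that for every μ ∈ ℝ the matrix μ²A + 2μC + D is positive definite. Then the complex 2n×2n block matrix M = [[0, Iₙ],[A⁻¹D, −2i A⁻¹C]] (real matrices being regarded as complex) has no purely imaginary eigenvalue: there is no μ ∈ ℝ with iμ in the spectrum of M. -/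
/-!
If `iμ` were an eigenvalue of `M = [[0, 1], [K, L]]` with eigenvector `(x, y)`, then `y = iμ x` and
`((iμ)² - iμ L - K) x = 0` with `x ≠ 0`. For `K = A⁻¹D` and `L = -2i A⁻¹C` this matrix is
`-A⁻¹(μ²A + 2μC + D)`, which is invertible because `A` and the pencil at `μ` are positive definite.
-/

open Matrix Polynomial

namespace Matrix

section Companion

variable {m R : Type*} [Fintype m] [DecidableEq m] [CommRing R]

theorem fromBlocks_zero_one_mulVec_eq_smul {K L : Matrix m m R} {z : R} {x y : m → R}
    (h : fromBlocks 0 1 K L *ᵥ Sum.elim x y = z • Sum.elim x y) :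
    y = z • x ∧ (z ^ 2 • (1 : Matrix m m R) - z • L - K) *ᵥ x = 0 := by
  rw [fromBlocks_mulVec] at h
  have hy : y = z • x := funext fun i => by simpa using congrFun h (Sum.inl i)
  have hx : K *ᵥ x + L *ᵥ y = z • y := funext fun i => by simpa using congrFun h (Sum.inr i)
  refine ⟨hy, ?_⟩
  rw [hy, mulVec_smul] at hx
  simp only [sub_mulVec, smul_mulVec, one_mulVec]
  linear_combination (norm := module) -hx

theorem det_sq_smul_one_sub_smul_sub_eq_zero_of_mem_roots_charpoly [IsDomain R]
    {K L : Matrix m m R} {z : R} (hz : z ∈ (fromBlocks 0 1 K L).charpoly.roots) :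
    (z ^ 2 • (1 : Matrix m m R) - z • L - K).det = 0 := by
  have hdet : (scalar (m ⊕ m) z - fromBlocks 0 1 K L).det = 0 := by
    rw [← eval_charpoly]
    exact isRoot_of_mem_roots hz
  obtain ⟨v, hv0, hv⟩ := exists_mulVec_eq_zero_iff.2 hdet
  have hv : fromBlocks 0 1 K L *ᵥ Sum.elim (v ∘ Sum.inl) (v ∘ Sum.inr) =
      z • Sum.elim (v ∘ Sum.inl) (v ∘ Sum.inr) := by
    rw [sub_mulVec, sub_eq_zero] at hv
    rw [Sum.elim_comp_inl_inr, ← hv]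
    ext i
    simp [mulVec_diagonal]
  obtain ⟨hy, hx⟩ := fromBlocks_zero_one_mulVec_eq_smul hv
  refine exists_mulVec_eq_zero_iff.1 ⟨v ∘ Sum.inl, fun h => hv0 ?_, hx⟩
  rw [← Sum.elim_comp_inl_inr v, hy, h, smul_zero, Sum.elim_zero_zero]

end Companion

variable {n : Type*} [Fintype n] [DecidableEq n]

theorem det_map_ofReal (X : Matrix n n ℝ) : (X.map Complex.ofReal).det = X.det :=
  (Complex.ofRealHom.map_det X).symm

theorem I_mul_ofReal_sq_smul_one_sub_smul_sub (A C D : Matrix n n ℝ) (hA : IsUnit A.det) (μ : ℝ) :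
    (Complex.I * μ) ^ 2 • (1 : Matrix n n ℂ)
        - (Complex.I * μ) • ((-2 * Complex.I) • (A⁻¹ * C).map Complex.ofReal)
        - (A⁻¹ * D).map Complex.ofReal
      = -(A⁻¹ * (μ ^ 2 • A + (2 * μ) • C + D)).map Complex.ofReal := by
  rw [mul_add, mul_add, mul_smul_comm, mul_smul_comm, nonsing_inv_mul _ hA]
  ext i j
  simp only [sub_apply, smul_apply, one_apply, map_apply, neg_apply, add_apply, smul_eq_mul]
  split_ifs <;> push_cast
  · linear_combination (μ ^ 2 + 2 * μ * ((A⁻¹ * C) i j : ℂ)) * Complex.I_sq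
  · linear_combination 2 * μ * ((A⁻¹ * C) i j : ℂ) * Complex.I_sq

end Matrix

theorem statement8_general (n : ℕ) (A C D : Matrix (Fin n) (Fin n) ℝ)
    (hA : A.PosDef)
    (hpencil : ∀ μ : ℝ, (μ ^ 2 • A + (2 * μ) • C + D).PosDef) :
    ¬ ∃ μ : ℝ, (Complex.I * (μ : ℂ)) ∈
      (Matrix.fromBlocks (0 : Matrix (Fin n) (Fin n) ℂ) (1 : Matrix (Fin n) (Fin n) ℂ)
        ((A⁻¹ * D).map (fun x : ℝ => (x : ℂ)))
        ((-2 * Complex.I) • ((A⁻¹ * C).map (fun x : ℝ => (x : ℂ))))).charpoly.roots := by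
  rintro ⟨μ, hμ⟩
  have hdetA : A.det ≠ 0 := hA.det_pos.ne'
  have hsing := det_sq_smul_one_sub_smul_sub_eq_zero_of_mem_roots_charpoly hμ
  rw [I_mul_ofReal_sq_smul_one_sub_smul_sub A C D hdetA.isUnit, det_neg, det_map_ofReal,
    det_mul, det_nonsing_inv, Ring.inverse_eq_inv'] at hsing
  simp only [mul_eq_zero, pow_eq_zero_iff', neg_eq_zero, one_ne_zero, false_and, false_or,
    Complex.ofReal_eq_zero, inv_eq_zero] at hsing
  exact hsing.elim hdetA (hpencil μ).det_pos.ne'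

/-- if `A, C, D` are real symmetric, `A` positive definite, and
`μ²A + 2μC + D` is positive definite for every real `μ`, then the block matrix
`M = [[0, Iₙ], [A⁻¹D, −2i A⁻¹C]]` (over `ℂ`) has no purely imaginary eigenvalue. -/
theorem statement8 (n : ℕ) (hn : 1 ≤ n) (A C D : Matrix (Fin n) (Fin n) ℝ)
    (hAs : A.IsSymm) (hCs : C.IsSymm) (hDs : D.IsSymm)
    (hA : A.PosDef)
    (hpencil : ∀ μ : ℝ, (μ ^ 2 • A + (2 * μ) • C + D).PosDef) :
    ¬ ∃ μ : ℝ, (Complex.I * (μ : ℂ)) ∈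
      (Matrix.fromBlocks (0 : Matrix (Fin n) (Fin n) ℂ) (1 : Matrix (Fin n) (Fin n) ℂ)
        ((A⁻¹ * D).map (fun x : ℝ => (x : ℂ)))
        ((-2 * Complex.I) • ((A⁻¹ * C).map (fun x : ℝ => (x : ℂ))))).charpoly.roots :=
  statement8_general n A C D hA hpencil
end

section
/- Let h > 0, h' > 0 and (U, U') ∈ ℝ² with (U, U') ≠ (0, 0). Then there exists k > 0 such that ( U tanh(kh/2) + U' tanh(kh'/2) )² < ( −k³ + U² tanh(kh/2) + U'² tanh(kh'/2) ) · ( k + tanh(kh/2) + tanh(kh'/2) ). -/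
open Real

lemma tanh_nonneg' {x : ℝ} (hx : 0 ≤ x) : 0 ≤ Real.tanh x := by
  rw [Real.tanh_eq_sinh_div_cosh]
  have h1 : 0 ≤ Real.sinh x := by
    rcases hx.eq_or_lt with h | h
    · simp [← h]
    · exact (Real.sinh_pos_iff.2 h).le
  exact div_nonneg h1 (Real.cosh_pos x).le

lemma tanh_le_one' (x : ℝ) : Real.tanh x ≤ 1 := by
  rw [Real.tanh_eq_sinh_div_cosh, div_le_one (Real.cosh_pos x)]
  nlinarith [Real.cosh_sq x, Real.cosh_pos x, sq_nonneg (Real.sinh x - Real.cosh x)]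

lemma half_le_tanh {x : ℝ} (hx : 0 ≤ x) (hx1 : x ≤ 1) : x / 2 ≤ Real.tanh x := by
  rw [Real.tanh_eq_sinh_div_cosh]
  have hs : x ≤ Real.sinh x := by
    rcases hx.eq_or_lt with h | h
    · simp [← h]
    · exact (Real.self_lt_sinh_iff.2 h).le
  have hc : Real.cosh x ≤ 2 := by
    have h1 : Real.cosh x ≤ Real.cosh 1 := by
      rw [Real.cosh_le_cosh]
      rw [abs_of_nonneg hx, abs_one]; exact hx1
    have : Real.cosh 1 < 2 := by
      rw [Real.cosh_eq]
      have h2 : Real.exp 1 < 2.7182818286 := Real.exp_one_lt_d9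
      have h3 : Real.exp (-1) < 1 := by
        rw [Real.exp_lt_one_iff]; norm_num
      linarith
    linarith [this]
  calc x / 2 ≤ Real.sinh x / 2 := by linarith
    _ ≤ Real.sinh x / Real.cosh x := by
        apply div_le_div_of_nonneg_left (le_trans hx hs) (by positivity) hc

/-- if `h, h' > 0` and `(U, U') ≠ (0, 0)`, then there is `k > 0` with
`(U tanh(kh/2) + U' tanh(kh'/2))² <
  (−k³ + U² tanh(kh/2) + U'² tanh(kh'/2)) (k + tanh(kh/2) + tanh(kh'/2))`. -/
theorem statement9 (h h' U U' : ℝ) (hh : 0 < h) (hh' : 0 < h')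
    (hU : (U, U') ≠ ((0 : ℝ), (0 : ℝ))) :
    ∃ k : ℝ, 0 < k ∧
      (U * Real.tanh (k * h / 2) + U' * Real.tanh (k * h' / 2)) ^ 2 <
        (-k ^ 3 + U ^ 2 * Real.tanh (k * h / 2) + U' ^ 2 * Real.tanh (k * h' / 2)) *
          (k + Real.tanh (k * h / 2) + Real.tanh (k * h' / 2)) := by
  set c : ℝ := max (U ^ 2 * h) (U' ^ 2 * h') with hc
  have hcpos : 0 < c := by
    have hne : U ≠ 0 ∨ U' ≠ 0 := by
      by_contra hcon
      push_neg at hcon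
      exact hU (by simp [hcon.1, hcon.2])
    rcases hne with h0 | h0
    · exact lt_max_iff.2 (Or.inl (by positivity))
    · exact lt_max_iff.2 (Or.inr (by positivity))
  set k : ℝ := min (min (1 / h) (1 / h')) (min 1 (c / 13)) with hk
  have hkpos : 0 < k := by positivity
  refine ⟨k, hkpos, ?_⟩
  have hk1 : k ≤ 1 := le_trans (min_le_right _ _) (min_le_left _ _)
  have hkc : k ≤ c / 13 := le_trans (min_le_right _ _) (min_le_right _ _)
  have hkh : k * h / 2 ≤ 1 := by
    have : k ≤ 1 / h := le_trans (min_le_left _ _) (min_le_left _ _)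
    rw [div_le_one (by norm_num : (0:ℝ) < 2)] at *
    calc k * h ≤ (1 / h) * h := by nlinarith
      _ = 1 := by field_simp
      _ ≤ 2 := by norm_num
  have hkh' : k * h' / 2 ≤ 1 := by
    have : k ≤ 1 / h' := le_trans (min_le_left _ _) (min_le_right _ _)
    rw [div_le_one (by norm_num : (0:ℝ) < 2)] at *
    calc k * h' ≤ (1 / h') * h' := by nlinarith
      _ = 1 := by field_simp
      _ ≤ 2 := by norm_num
  clear hk
  clear_value k
  set t : ℝ := Real.tanh (k * h / 2) with ht
  set t' : ℝ := Real.tanh (k * h' / 2) with ht'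
  have htnn : 0 ≤ t := tanh_nonneg' (by positivity)
  have ht'nn : 0 ≤ t' := tanh_nonneg' (by positivity)
  have ht1 : t ≤ 1 := tanh_le_one' _
  have ht'1 : t' ≤ 1 := tanh_le_one' _
  have htlb : k * h / 4 ≤ t := by
    have := half_le_tanh (x := k * h / 2) (by positivity) hkh
    linarith
  have ht'lb : k * h' / 4 ≤ t' := by
    have := half_le_tanh (x := k * h' / 2) (by positivity) hkh'
    linarith
  clear ht ht'
  clear_value t t'
  -- key: U²t + U'²t' ≥ c k / 4 > 3k² ≥ k²(k+t+t')
  have hbig : 3 * k ^ 2 < U ^ 2 * t + U' ^ 2 * t' := by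
    have h13 : 13 * k ≤ c := by linarith [hkc, (le_div_iff₀ (by norm_num : (0:ℝ) < 13)).mp hkc]
    rcases le_total (U' ^ 2 * h') (U ^ 2 * h) with hmax | hmax
    · have hceq : c = U ^ 2 * h := max_eq_left hmax
      have : c * k / 4 ≤ U ^ 2 * t := by
        rw [hceq]
        nlinarith [sq_nonneg U, mul_le_mul_of_nonneg_left htlb (sq_nonneg U)]
      nlinarith [mul_nonneg (sq_nonneg U') ht'nn, hkpos]
    · have hceq : c = U' ^ 2 * h' := max_eq_right hmax
      have : c * k / 4 ≤ U' ^ 2 * t' := by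
        rw [hceq]
        nlinarith [sq_nonneg U', mul_le_mul_of_nonneg_left ht'lb (sq_nonneg U')]
      nlinarith [mul_nonneg (sq_nonneg U) htnn, hkpos]
  -- Cauchy–Schwarz part
  have hCS : (U * t + U' * t') ^ 2 ≤ (U ^ 2 * t + U' ^ 2 * t') * (t + t') := by
    nlinarith [mul_nonneg htnn ht'nn, sq_nonneg (U - U'), mul_nonneg (mul_nonneg htnn ht'nn) (sq_nonneg (U - U'))]
  have hsum : k + t + t' ≤ 3 := by linarith
  have hRHS : (U ^ 2 * t + U' ^ 2 * t') * (t + t') <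
      (-k ^ 3 + U ^ 2 * t + U' ^ 2 * t') * (k + t + t') := by
    have h1 : k ^ 2 * (k + t + t') < U ^ 2 * t + U' ^ 2 * t' := by
      have : k ^ 2 * (k + t + t') ≤ 3 * k ^ 2 := by nlinarith [sq_nonneg k]
      linarith
    have h2 : 0 < k * (U ^ 2 * t + U' ^ 2 * t' - k ^ 2 * (k + t + t')) :=
      mul_pos hkpos (by linarith)
    nlinarith [h2]
  linarith [hCS, hRHS]
end

section
/- For every ε > 0 there exists K > 0 such that for every real k with |k| ≥ K, every eigenvalue λ of M(k) satisfies |Re λ| < ε. (The spectrum of M(k) becomes purely imaginary as |k| → ∞.) -/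
/-!
Once `|k|` is large, `M(k)` is the companion matrix of the quadratic pencil
`λ² A + 2iλ C - (k B - k⁴)` in which `A = 1 + O(1/k)` is positive definite, `C` is symmetric and
`k B - k⁴` is negative definite (its `k⁴` term dominates). For an eigenvector `(x, λx)` the
numbers `a = x*Ax > 0`, `c = x*Cx ∈ ℝ` and `d = x*(kB - k⁴)x < 0` satisfy `a λ² + 2i c λ = d`.
If `Re λ ≠ 0`, the imaginary part of this equation gives `c = -a Im λ`, and then its real part
reads `a |λ|² = d < 0`, which is absurd. So the spectrum of `M(k)` is purely imaginary for all
large `|k|`.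
-/

open Matrix ComplexOrder

section quadraticForms

variable {ι : Type*} [Fintype ι]

theorem star_dotProduct_self_eq_sum_sq_norm (x : ι → ℂ) :
    star x ⬝ᵥ x = ((∑ i, ‖x i‖ ^ 2 : ℝ) : ℂ) := by
  simp [dotProduct, Complex.mul_conj', mul_comm]

theorem norm_star_dotProduct_mulVec_le (R : Matrix ι ι ℂ) {m : ℝ} (hm : ∀ i j, ‖R i j‖ ≤ m)
    (x : ι → ℂ) : ‖star x ⬝ᵥ R *ᵥ x‖ ≤ m * Fintype.card ι * ∑ i, ‖x i‖ ^ 2 := by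
  rcases isEmpty_or_nonempty ι with _ | ⟨⟨i₀⟩⟩
  · simp
  have hm₀ : 0 ≤ m := (norm_nonneg _).trans (hm i₀ i₀)
  have hsum : (∑ i, ‖x i‖) ^ 2 ≤ Fintype.card ι * ∑ i, ‖x i‖ ^ 2 :=
    sq_sum_le_card_mul_sum_sq
  calc ‖star x ⬝ᵥ R *ᵥ x‖ = ‖∑ i, ∑ j, star (x i) * (R i j * x j)‖ := by
        simp [dotProduct, mulVec, Finset.mul_sum]
    _ ≤ ∑ i, ∑ j, ‖x i‖ * (m * ‖x j‖) := by
        refine (norm_sum_le _ _).trans (Finset.sum_le_sum fun i _ => ?_)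
        refine (norm_sum_le _ _).trans (Finset.sum_le_sum fun j _ => ?_)
        rw [norm_mul, norm_mul, norm_star]
        gcongr
        exact hm i j
    _ = m * (∑ i, ‖x i‖) ^ 2 := by
        simp only [← Finset.mul_sum, ← Finset.sum_mul]; ring
    _ ≤ m * (Fintype.card ι * ∑ i, ‖x i‖ ^ 2) := by
        gcongr
    _ = _ := by ring

theorem posDef_of_norm_sub_smul_one_le [DecidableEq ι] {R : Matrix ι ι ℂ} (hR : R.IsHermitian)
    {c m : ℝ} (hm : ∀ i j, ‖(R - (c : ℂ) • 1) i j‖ ≤ m) (hlt : Fintype.card ι * m < c) :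
    R.PosDef := by
  refine PosDef.of_dotProduct_mulVec_pos hR fun x hx => Complex.pos_iff.2 ⟨?_, ?_⟩
  · set σ := ∑ i, ‖x i‖ ^ 2
    have hσ : 0 < σ := by
      have := dotProduct_star_self_pos_iff.2 hx
      rwa [star_dotProduct_self_eq_sum_sq_norm, Complex.zero_lt_real] at this
    have hsplit : star x ⬝ᵥ R *ᵥ x = c * σ + star x ⬝ᵥ (R - (c : ℂ) • 1) *ᵥ x := by
      rw [sub_mulVec, dotProduct_sub, smul_mulVec, one_mulVec, dotProduct_smul,
        star_dotProduct_self_eq_sum_sq_norm, smul_eq_mul]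
      ring
    have hE := (Complex.abs_re_le_norm _).trans (norm_star_dotProduct_mulVec_le _ hm x)
    rw [hsplit, Complex.add_re, ← Complex.ofReal_mul, Complex.ofReal_re]
    nlinarith [neg_abs_le (star x ⬝ᵥ (R - (c : ℂ) • 1) *ᵥ x).re]
  · exact (hR.im_star_dotProduct_mulVec_self x).symm

open Complex in
theorem re_eq_zero_of_sq_mul_add_two_I_mul_eq {a c d μ : ℂ} (ha : 0 < a) (hc : c.im = 0)
    (hd : d < 0) (h : μ ^ 2 * a + 2 * I * μ * c = d) : μ.re = 0 := by
  obtain ⟨ha, ha'⟩ := pos_iff.1 ha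
  obtain ⟨hd, hd'⟩ := neg_iff.1 hd
  have hre := congrArg re h
  have him := congrArg im h
  simp only [add_re, add_im, mul_re, mul_im, sq, I_re, I_im, re_ofNat, im_ofNat, ← ha', hc,
    hd'] at hre him
  by_contra hμ
  have hc' : c.re = -a.re * μ.im := mul_left_cancel₀ hμ (by linear_combination him / 2)
  have hnorm : a.re * (μ.re ^ 2 + μ.im ^ 2) = d.re := by
    rw [hc'] at hre
    linear_combination hre
  have : 0 < a.re * (μ.re ^ 2 + μ.im ^ 2) := by positivity
  linarith

open Complex in
theorem re_eq_zero_of_isRoot_charpoly_fromBlocks [DecidableEq ι] {A K C P Q : Matrix ι ι ℂ}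
    (hA : A.PosDef) (hK : (-K).PosDef) (hC : C.IsHermitian) (hP : A * P = K)
    (hQ : A * Q = (-2 * I) • C) {μ : ℂ} (hμ : (fromBlocks 0 1 P Q).charpoly.IsRoot μ) :
    μ.re = 0 := by
  rw [Polynomial.IsRoot, eval_charpoly] at hμ
  obtain ⟨v, hv, hμv⟩ := exists_mulVec_eq_zero_iff.2 hμ
  obtain ⟨x, y, rfl⟩ : ∃ x y, v = Sum.elim x y :=
    ⟨v ∘ Sum.inl, v ∘ Sum.inr, (Sum.elim_comp_inl_inr v).symm⟩
  rw [sub_mulVec, fromBlocks_mulVec, sub_eq_zero] at hμv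
  have hy : y = μ • x := funext fun i => by simpa using (congrFun hμv (Sum.inl i)).symm
  have hPQ : P *ᵥ x + Q *ᵥ y = μ • y :=
    funext fun i => by simpa using (congrFun hμv (Sum.inr i)).symm
  have hx : x ≠ 0 := by
    rintro rfl
    exact hv (by rw [hy, smul_zero, Sum.elim_zero_zero])
  have hmotion := congrArg (star x ⬝ᵥ A *ᵥ ·) hPQ
  simp only [mulVec_add, mulVec_mulVec, hP, hQ, hy, mulVec_smul, smul_mulVec, dotProduct_add,
    dotProduct_smul, smul_eq_mul] at hmotion
  refine re_eq_zero_of_sq_mul_add_two_I_mul_eq (d := star x ⬝ᵥ K *ᵥ x)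
    (hA.dotProduct_mulVec_pos hx) (hC.im_star_dotProduct_mulVec_self x) ?_
    (by linear_combination hmotion.symm)
  simpa [neg_mulVec] using hK.dotProduct_mulVec_pos hx

theorem map_ofReal_mul_map_inv_mul [DecidableEq ι] {A : Matrix ι ι ℝ}
    (hA : (A.map ((↑) : ℝ → ℂ)).PosDef) (R : Matrix ι ι ℝ) :
    A.map ((↑) : ℝ → ℂ) * (A⁻¹ * R).map ((↑) : ℝ → ℂ) = R.map ((↑) : ℝ → ℂ) := by
  have hdet : IsUnit A.det := by
    have hdet_map : (A.map ((↑) : ℝ → ℂ)).det = A.det := (Complex.ofRealHom.map_det A).symm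
    simpa [hdet_map] using (isUnit_iff_isUnit_det _).1 hA.isUnit
  have h := (Matrix.map_mul (L := A) (M := A⁻¹ * R) (f := Complex.ofRealHom)).symm
  rwa [← Matrix.mul_assoc, mul_nonsing_inv _ hdet, Matrix.one_mul] at h

theorem posDef_map_ofReal_of_abs_sub_smul_one_le [DecidableEq ι] {R : Matrix ι ι ℝ}
    (hR : R.IsSymm) {c m : ℝ} (hm : ∀ i j, |(R - c • 1) i j| ≤ m)
    (hlt : Fintype.card ι * m < c) : (R.map ((↑) : ℝ → ℂ)).PosDef := by
  refine posDef_of_norm_sub_smul_one_le ?_ (fun i j => ?_) hlt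
  · exact (isHermitian_iff_isSymm.2 hR).map _ fun r => (Complex.conj_ofReal r).symm
  · have hentry : (R.map ((↑) : ℝ → ℂ) - (c : ℂ) • 1) i j = ((R - c • 1) i j : ℂ) := by
      by_cases hij : i = j <;> simp [one_apply, hij]
    rw [hentry, Complex.norm_real, Real.norm_eq_abs]
    exact hm i j

end quadraticForms

theorem abs_csch_le_one {t : ℝ} (ht : 1 ≤ |t|) : |csch t| ≤ 1 := by
  have hs : 1 ≤ Real.sinh |t| := ht.trans (Real.self_le_sinh_iff.2 (abs_nonneg t))
  rw [csch, abs_div, abs_one, Real.abs_sinh]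
  exact div_le_one_of_le₀ hs (by positivity)

theorem abs_coth_le_two {t : ℝ} (ht : 1 ≤ |t|) : |coth t| ≤ 2 := by
  have hs : 1 ≤ Real.sinh |t| := ht.trans (Real.self_le_sinh_iff.2 (abs_nonneg t))
  -- `cosh |t| = sinh |t| + exp (-|t|) ≤ sinh |t| + 1`
  have hcosh : Real.cosh |t| ≤ Real.sinh |t| + 1 := by
    have := Real.cosh_sub_sinh |t|
    have := Real.exp_le_one_iff.2 (neg_nonpos.2 (abs_nonneg t))
    linarith
  rw [coth, abs_div, Real.abs_sinh, abs_of_pos (Real.cosh_pos _), ← Real.cosh_abs,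
    div_le_iff₀ (by linarith)]
  linarith

def tridiag (n : ℕ) (d e : ℕ → ℝ) : Matrix (Fin n) (Fin n) ℝ := fun i j =>
  if (i : ℕ) = (j : ℕ) then d i
  else if (i : ℕ) + 1 = (j : ℕ) then e ((i : ℕ) + 1)
  else if (j : ℕ) + 1 = (i : ℕ) then e ((j : ℕ) + 1)
  else 0

section tridiag

variable {n : ℕ} {d e : ℕ → ℝ}

theorem tridiag_isSymm : (tridiag n d e).IsSymm := by
  ext i j
  simp only [transpose_apply, tridiag]
  by_cases h : (i : ℕ) = j
  · simp [h]
  · rw [if_neg h, if_neg (Ne.symm h)]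
    split_ifs <;> first | rfl | omega

theorem tridiag_sub_one : tridiag n d e - 1 = tridiag n (fun m => d m - 1) e := by
  ext i j
  by_cases h : i = j
  · simp [tridiag, h]
  · simp [tridiag, h, one_apply, Fin.val_ne_of_ne h]

theorem abs_tridiag_apply_le {c : ℝ} (hd : ∀ m < n, |d m| ≤ c) (he : ∀ m ≤ n, |e m| ≤ c)
    (i j : Fin n) : |tridiag n d e i j| ≤ c := by
  unfold tridiag
  split_ifs
  · exact hd _ i.isLt
  · exact he _ i.isLt
  · exact he _ j.isLt
  · simpa using (abs_nonneg _).trans (he 0 (Nat.zero_le n))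

end tridiag

section plates

variable {n : ℕ} {Δh U : ℕ → ℝ} {k S : ℝ}

theorem Amat_eq_tridiag : Amat n Δh k =
    tridiag n (fun m => (k + coth (k * Δh m) + coth (k * Δh (m + 1))) / k)
      (fun m => -(csch (k * Δh m) / k)) := rfl

theorem Bmat_eq_tridiag : Bmat n Δh U k =
    tridiag n (fun m => U m ^ 2 * coth (k * Δh m) + U (m + 1) ^ 2 * coth (k * Δh (m + 1)))
      (fun m => -(U m ^ 2 * csch (k * Δh m))) := rfl

theorem Cmat_eq_tridiag : Cmat n Δh U k =
    tridiag n (fun m => U m * coth (k * Δh m) + U (m + 1) * coth (k * Δh (m + 1)))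
      (fun m => -(U m * csch (k * Δh m))) := rfl

theorem ne_zero_of_forall_one_le_abs_mul (hk : ∀ i ≤ n, 1 ≤ |k * Δh i|) : k ≠ 0 := by
  rintro rfl
  have h := hk 0 (Nat.zero_le n)
  norm_num at h

theorem Amat_isSymm : (Amat n Δh k).IsSymm := by
  rw [Amat_eq_tridiag]; exact tridiag_isSymm

theorem Bmat_isSymm : (Bmat n Δh U k).IsSymm := by
  rw [Bmat_eq_tridiag]; exact tridiag_isSymm

theorem Cmat_isSymm : (Cmat n Δh U k).IsSymm := by
  rw [Cmat_eq_tridiag]; exact tridiag_isSymm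

theorem abs_Amat_sub_one_apply_le (hk : ∀ i ≤ n, 1 ≤ |k * Δh i|) (i j : Fin n) :
    |(Amat n Δh k - 1) i j| ≤ 4 / |k| := by
  have hk₀ := ne_zero_of_forall_one_le_abs_mul hk
  rw [Amat_eq_tridiag, tridiag_sub_one]
  refine abs_tridiag_apply_le (fun m hm => ?_) (fun m hm => ?_) i j
  · have h₁ := abs_coth_le_two (hk m hm.le)
    have h₂ := abs_coth_le_two (hk (m + 1) hm)
    rw [show (k + coth (k * Δh m) + coth (k * Δh (m + 1))) / k - 1
        = (coth (k * Δh m) + coth (k * Δh (m + 1))) / k by field_simp; ring, abs_div]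
    gcongr
    linarith [abs_add_le (coth (k * Δh m)) (coth (k * Δh (m + 1)))]
  · rw [abs_neg, abs_div]
    gcongr
    linarith [abs_csch_le_one (hk m hm)]

theorem abs_Bmat_apply_le (hk : ∀ i ≤ n, 1 ≤ |k * Δh i|) (hU : ∀ i ≤ n, U i ^ 2 ≤ S)
    (i j : Fin n) : |Bmat n Δh U k i j| ≤ 4 * S := by
  have hS : 0 ≤ S := (sq_nonneg _).trans (hU 0 (Nat.zero_le n))
  rw [Bmat_eq_tridiag]
  refine abs_tridiag_apply_le (fun m hm => ?_) (fun m hm => ?_) i j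
  · have h₁ := abs_coth_le_two (hk m hm.le)
    have h₂ := abs_coth_le_two (hk (m + 1) hm)
    have hU₁ := hU m hm.le
    have hU₂ := hU (m + 1) hm
    calc _ ≤ |U m ^ 2 * coth (k * Δh m)| + |U (m + 1) ^ 2 * coth (k * Δh (m + 1))| :=
          abs_add_le _ _
      _ ≤ S * 2 + S * 2 := by
          rw [abs_mul, abs_mul, abs_sq, abs_sq]
          gcongr
      _ = 4 * S := by ring
  · rw [abs_neg, abs_mul, abs_sq]
    calc U m ^ 2 * |csch (k * Δh m)| ≤ S * 1 := by
          gcongr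
          exacts [hU m hm, abs_csch_le_one (hk m hm)]
      _ ≤ 4 * S := by linarith

theorem Amat_map_posDef (hk : ∀ i ≤ n, 1 ≤ |k * Δh i|) (hkn : 4 * n < |k|) :
    ((Amat n Δh k).map ((↑) : ℝ → ℂ)).PosDef := by
  have hk₀ : 0 < |k| := by linarith [(Nat.cast_nonneg n : (0 : ℝ) ≤ n)]
  refine posDef_map_ofReal_of_abs_sub_smul_one_le (c := 1) (m := 4 / |k|)
    Amat_isSymm (fun i j => ?_) ?_
  · simpa using abs_Amat_sub_one_apply_le hk i j
  · rw [Fintype.card_fin, mul_div_assoc', div_lt_one hk₀]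
    linarith

theorem neg_smul_Bmat_sub_map_posDef (hk : ∀ i ≤ n, 1 ≤ |k * Δh i|) (hU : ∀ i ≤ n, U i ^ 2 ≤ S)
    (hkS : 4 * S * n < |k| ^ 3) :
    (-(k • Bmat n Δh U k - k ^ 4 • 1).map ((↑) : ℝ → ℂ)).PosDef := by
  have hk₀ : 0 < |k| := abs_pos.2 (ne_zero_of_forall_one_le_abs_mul hk)
  rw [← Matrix.map_neg _ Complex.ofReal_neg]
  refine posDef_map_ofReal_of_abs_sub_smul_one_le (c := k ^ 4) (m := |k| * (4 * S))
    ((Bmat_isSymm.smul k).sub (isSymm_one.smul _)).neg (fun i j => ?_) ?_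
  · simpa [abs_mul] using mul_le_mul_of_nonneg_left (abs_Bmat_apply_le hk hU i j) hk₀.le
  · rw [Fintype.card_fin, ← Even.pow_abs (by decide)]
    nlinarith

theorem re_eq_zero_of_mem_roots_charpoly_Mmat (hk : ∀ i ≤ n, 1 ≤ |k * Δh i|)
    (hU : ∀ i ≤ n, U i ^ 2 ≤ S) (hkn : 4 * n < |k|) (hkS : 4 * S * n < |k| ^ 3) {μ : ℂ}
    (hμ : μ ∈ (Mmat n Δh U k).charpoly.roots) : μ.re = 0 := by
  have hA := Amat_map_posDef hk hkn
  refine re_eq_zero_of_isRoot_charpoly_fromBlocks (C := (Cmat n Δh U k).map _) hA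
    (neg_smul_Bmat_sub_map_posDef hk hU hkS)
    ((isHermitian_iff_isSymm.2 Cmat_isSymm).map _
      fun r => (Complex.conj_ofReal r).symm)
    (map_ofReal_mul_map_inv_mul hA _) ?_ (Polynomial.isRoot_of_mem_roots hμ)
  rw [Matrix.mul_smul, map_ofReal_mul_map_inv_mul hA]

end plates

theorem statement18_general (n : ℕ) (Δh U : ℕ → ℝ) (hΔh : ∀ i ≤ n, 0 < Δh i)
    (ε : ℝ) (hε : 0 < ε) :
    ∃ K : ℝ, 0 < K ∧ ∀ k : ℝ, K ≤ |k| →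
      ∀ lam ∈ (Mmat n Δh U k).charpoly.roots, |lam.re| < ε := by
  set S := ∑ m ∈ Finset.range (n + 1), U m ^ 2
  have hU : ∀ i ≤ n, U i ^ 2 ≤ S := fun i hi =>
    Finset.single_le_sum (fun m _ => sq_nonneg (U m)) (Finset.mem_range_succ_iff.2 hi)
  have hlarge : ∀ᶠ r : ℝ in Filter.atTop, 0 < r ∧ (∀ i ∈ Set.Iic n, 1 / Δh i ≤ r) ∧
      4 * n < r ∧ 4 * S * n < r ^ 3 :=
    (Filter.eventually_gt_atTop 0).and <|
      ((Filter.eventually_all_finite (Set.finite_Iic n)).2 fun i _ =>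
        Filter.eventually_ge_atTop _).and <|
      (Filter.eventually_gt_atTop _).and <|
        (Filter.tendsto_pow_atTop (by norm_num : 3 ≠ 0)).eventually_gt_atTop _
  obtain ⟨K, hK₀, hKΔh, hKn, hKS⟩ := hlarge.exists
  refine ⟨K, hK₀, fun k hk μ hμ => ?_⟩
  have hkΔh : ∀ i ≤ n, 1 ≤ |k * Δh i| := fun i hi => by
    rw [abs_mul, abs_of_pos (hΔh i hi), ← div_le_iff₀ (hΔh i hi)]
    exact (hKΔh i hi).trans hk
  have hkS : 4 * S * n < |k| ^ 3 := hKS.trans_le (by gcongr)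
  rw [re_eq_zero_of_mem_roots_charpoly_Mmat hkΔh hU (hKn.trans_le hk) hkS hμ, abs_zero]
  exact hε

/-- for every `ε > 0` there is `K > 0` such that for every real `k` with
`|k| ≥ K`, every eigenvalue of `M(k)` has real part of absolute value `< ε`. -/
theorem statement18 (n : ℕ) (hn : 1 ≤ n) (Δh U : ℕ → ℝ) (hΔh : ∀ i ≤ n, 0 < Δh i)
    (ε : ℝ) (hε : 0 < ε) :
    ∃ K : ℝ, 0 < K ∧ ∀ k : ℝ, K ≤ |k| →
      ∀ lam ∈ (Mmat n Δh U k).charpoly.roots, |lam.re| < ε :=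
  statement18_general n Δh U hΔh ε hε
end
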